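/- arXiv:1911.00555 — 3 statements merged into one kernel-verified Lean document; each statement's English description precedes it below -/
import Mathlib

section
/- Let G be a group such that the center of its power graph 𝒢(G) has more than one element. Then G is isomorphic to (ℤ,+) if and only if G is the union of countably many ≡_G-classes of cardinality 2 together with exactly one ≡_G-class of cardinality 3, where ≡_G identifies elements with equal closed neighborhoods in 𝒢(G). -/
set_option linter.unusedVariables false

/-- The power graph of a group: distinct `x, y` adjacent iff one is an integer power of the other. -/
def powerGraph (G : Type*) [Group G] : SimpleGraph G where
  Adj x y := x ≠ y ∧ ∃ n : ℤ, y = x ^ n ∨ x = y ^ n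
  symm := ⟨fun x y ⟨hxy, n, h⟩ => ⟨hxy.symm, n, h.symm⟩⟩
  loopless := ⟨fun x ⟨h, _⟩ => h rfl⟩

/-- The Z±-power graph of a group: distinct `x, y` adjacent iff one is a nonzero integer power
of the other. -/
def zpmPowerGraph (G : Type*) [Group G] : SimpleGraph G where
  Adj x y := x ≠ y ∧ ∃ n : ℤ, n ≠ 0 ∧ (y = x ^ n ∨ x = y ^ n)
  symm := ⟨fun x y ⟨hxy, n, hn, h⟩ => ⟨hxy.symm, n, hn, h.symm⟩⟩
  loopless := ⟨fun x ⟨h, _⟩ => h rfl⟩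

/-- The N-power graph of a group: distinct `x, y` adjacent iff one is a positive-integer power
of the other. -/
def nPowerGraph (G : Type*) [Group G] : SimpleGraph G where
  Adj x y := x ≠ y ∧ ∃ n : ℕ, 0 < n ∧ (y = x ^ n ∨ x = y ^ n)
  symm := ⟨fun x y ⟨hxy, n, hn, h⟩ => ⟨hxy.symm, n, hn, h.symm⟩⟩
  loopless := ⟨fun x ⟨h, _⟩ => h rfl⟩

/-- The closed neighborhood of a vertex in a graph. -/
def closedNbhd {V : Type*} (Γ : SimpleGraph V) (x : V) : Set V :=
  insert x {y | Γ.Adj x y}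

/-- The center of a graph: the set of vertices adjacent to every other vertex. -/
def graphCenter {V : Type*} (Γ : SimpleGraph V) : Set V :=
  {x | ∀ y, y ≠ x → Γ.Adj x y}

/-- The `≡_G` class of `x`: all elements with the same closed neighborhood as `x` in the
power graph of `G`. -/
def eqvClass (G : Type*) [Group G] (x : G) : Set G :=
  {y | closedNbhd (powerGraph G) y = closedNbhd (powerGraph G) x}

/-!
In the power graph, `y` lies in the closed neighborhood of `x` exactly when `⟨x⟩` and `⟨y⟩` are
comparable, so a central vertex `x ≠ 1` has a cyclic subgroup comparable with every other one.

If `x` has infinite order and `x = yⁿ` with `|n| ≥ 2`, then `y ^ (2n + 1)` is comparable with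
neither, as `n ∤ 2n + 1` and `2n + 1 ∤ n`; hence `G = ⟨x⟩ ≅ ℤ`. The same divisibility trick
computes the classes of `ℤ = ⟨g⟩`: the class of `g ^ a` is `{1, g, g⁻¹}` if `|a| ≤ 1` and
`{g ^ a, g ^ (-a)}` otherwise.

If `x` has finite order, all generators of a cyclic subgroup `⟨y⟩` are `≡`-equivalent, so
`φ (orderOf y) ≤ 3` and `orderOf y ∈ {1, 2, 3, 4, 6}`. Comparability with `⟨x⟩` then forces
`orderOf x = 2` and `orderOf y = 4` for every `y ∉ ⟨x⟩`, and in such a group every class has at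
most two elements, so there is no class of size three.
-/

open Subgroup

open scoped Nat

theorem Nat.eq_of_totient_le_three {n : ℕ} (hn : n ≠ 0) (h : φ n ≤ 3) :
    n = 1 ∨ n = 2 ∨ n = 3 ∨ n = 4 ∨ n = 6 := by
  have h12 : n ∣ 12 := by
    refine (Nat.dvd_iff_prime_pow_dvd_dvd 12 n).2 fun p k hp hpk => ?_
    have hφ : φ (p ^ k) ≤ 3 := (Nat.le_of_dvd (Nat.totient_pos.2 (Nat.pos_of_ne_zero hn))
      (Nat.totient_dvd_of_dvd hpk)).trans h
    rcases k with _ | k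
    · exact one_dvd _
    rw [Nat.totient_prime_pow_succ hp] at hφ
    have hp4 : p ≤ 4 := by
      have := (Nat.le_mul_of_pos_left _ (pow_pos hp.pos k)).trans hφ
      omega
    have hk : 2 ^ k ≤ 3 := (Nat.pow_le_pow_left hp.two_le k).trans
      ((Nat.le_mul_of_pos_right _ (by have := hp.two_le; omega)).trans hφ)
    have hk1 : k ≤ 1 := by
      by_contra hk1
      have := Nat.pow_le_pow_right (show 0 < 2 by norm_num) (show 2 ≤ k by omega)
      omega
    interval_cases p <;> interval_cases k <;> revert hp hφ <;> decide
  have := Nat.le_of_dvd (by norm_num) h12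
  interval_cases n <;> first | omega | exact absurd h12 (by decide) | exact absurd h (by decide)

theorem Int.natAbs_le_one_of_dvd_or_dvd_two_mul_add_one {a : ℤ}
    (h : a ∣ 2 * a + 1 ∨ 2 * a + 1 ∣ a) : a.natAbs ≤ 1 := by
  rcases h with h | h
  · have h1 : a ∣ 1 := (Int.dvd_add_right (dvd_mul_left a 2)).1 h
    exact Nat.le_of_dvd one_pos (Int.natAbs_dvd_natAbs.2 h1)
  · rcases eq_or_ne a 0 with rfl | ha
    · simp
    · have := Nat.le_of_dvd (by omega) (Int.natAbs_dvd_natAbs.2 h)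
      omega

theorem Set.encard_eq_natCard {α : Type*} {s : Set α} (hs : Nat.card s ≠ 0) :
    s.encard = Nat.card s :=
  haveI := Nat.finite_of_card_ne_zero hs
  ENat.card_eq_coe_natCard s

theorem mem_graphCenter_iff {V : Type*} {Γ : SimpleGraph V} {x : V} :
    x ∈ graphCenter Γ ↔ closedNbhd Γ x = Set.univ := by
  simp only [graphCenter, closedNbhd, Set.eq_univ_iff_forall, Set.mem_insert_iff,
    Set.mem_ofPred_eq, or_iff_not_imp_left]

section PowerGraph

variable {G : Type*} [Group G]

theorem mem_closedNbhd_powerGraph_iff {x y : G} :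
    y ∈ closedNbhd (powerGraph G) x ↔ y ∈ zpowers x ∨ x ∈ zpowers y := by
  rcases eq_or_ne y x with rfl | hyx
  · simp [closedNbhd]
  · simp [closedNbhd, powerGraph, hyx, hyx.symm, mem_zpowers_iff, eq_comm, exists_or]

theorem closedNbhd_powerGraph_eq_of_zpowers_eq {x y : G} (h : zpowers x = zpowers y) :
    closedNbhd (powerGraph G) x = closedNbhd (powerGraph G) y := by
  ext w
  simp only [mem_closedNbhd_powerGraph_iff, ← zpowers_le, h]

theorem closedNbhd_powerGraph_one : closedNbhd (powerGraph G) (1 : G) = Set.univ :=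
  Set.eq_univ_of_forall fun _ => mem_closedNbhd_powerGraph_iff.2 (Or.inr (one_mem _))

theorem mem_zpowers_or_mem_zpowers_of_closedNbhd_eq_univ {x : G}
    (hx : closedNbhd (powerGraph G) x = Set.univ) (y : G) : y ∈ zpowers x ∨ x ∈ zpowers y :=
  mem_closedNbhd_powerGraph_iff.1 (hx ▸ Set.mem_univ y)

theorem orderOf_dvd_or_dvd_of_closedNbhd_eq_univ {x : G}
    (hx : closedNbhd (powerGraph G) x = Set.univ) (y : G) :
    orderOf y ∣ orderOf x ∨ orderOf x ∣ orderOf y :=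
  (mem_zpowers_or_mem_zpowers_of_closedNbhd_eq_univ hx y).imp
    orderOf_dvd_of_mem_zpowers orderOf_dvd_of_mem_zpowers

theorem IsOfFinOrder.of_zpow {y : G} {n : ℤ} (h : IsOfFinOrder (y ^ n)) (hn : n ≠ 0) :
    IsOfFinOrder y := by
  rcases Int.natAbs_eq n with hn' | hn' <;> rw [hn'] at h
  · exact (zpow_natCast y _ ▸ h).of_pow (by omega)
  · rw [zpow_neg, isOfFinOrder_inv_iff, zpow_natCast] at h
    exact h.of_pow (by omega)

theorem zpowers_eq_of_mem_of_orderOf_eq {x y : G} (hy : IsOfFinOrder y) (h : x ∈ zpowers y)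
    (ho : orderOf x = orderOf y) : zpowers x = zpowers y := by
  have : Finite (zpowers y) := (finite_zpowers.2 hy).to_subtype
  exact eq_of_le_of_card_ge (zpowers_le.2 h) (by rw [Nat.card_zpowers, Nat.card_zpowers, ho])

theorem IsOfFinOrder.encard_zpowers {x : G} (hx : IsOfFinOrder x) :
    (zpowers x : Set G).encard = orderOf x := by
  rw [← (finite_zpowers.2 hx).cast_ncard_eq, ← Nat.card_coe_set_eq, SetLike.coe_sort_coe,
    Nat.card_zpowers]

theorem totient_orderOf_le_encard_eqvClass (y : G) :
    (φ (orderOf y) : ℕ∞) ≤ (eqvClass G y).encard := by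
  classical
  set s := {j ∈ Finset.range (orderOf y) | (orderOf y).Coprime j}
  have hinj : Set.InjOn (y ^ ·) s :=
    pow_injOn_Iio_orderOf.mono fun j hj => (Finset.mem_filter.1 hj).1 |> Finset.mem_range.1
  calc (φ (orderOf y) : ℕ∞) = (s : Set ℕ).encard := by
        rw [Set.encard_coe_eq_coe_finsetCard]; rfl
    _ = ((y ^ ·) '' s).encard := hinj.encard_image.symm
    _ ≤ (eqvClass G y).encard := Set.encard_mono ?_
  rintro _ ⟨j, hj, rfl⟩
  have hj : j.Coprime (orderOf y) := (Finset.mem_filter.1 hj).2.symm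
  exact closedNbhd_powerGraph_eq_of_zpowers_eq <| le_antisymm
    (zpowers_le.2 (pow_mem (mem_zpowers y) j)) (zpowers_le.2 (mem_zpowers_pow_iff.2 hj))

end PowerGraph

section Torsion

variable {G : Type*} [Group G] {x : G} (hx : closedNbhd (powerGraph G) x = Set.univ)
  (hx1 : x ≠ 1) (hxf : IsOfFinOrder x) (hcard : ∀ y : G, (eqvClass G y).encard ≤ 3)
include hx hx1 hxf hcard

theorem orderOf_eq_two_and_orderOf_eq_four {y : G} (hy : y ∉ zpowers x) :
    orderOf x = 2 ∧ orderOf y = 4 := by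
  have hxy : x ∈ zpowers y :=
    (mem_zpowers_or_mem_zpowers_of_closedNbhd_eq_univ hx y).resolve_left hy
  have hyf : IsOfFinOrder y := by
    obtain ⟨n, rfl⟩ := hxy
    exact hxf.of_zpow (by rintro rfl; exact hx1 (zpow_zero y))
  have hdvd : orderOf x ∣ orderOf y := orderOf_dvd_of_mem_zpowers hxy
  have hne : orderOf x ≠ orderOf y := fun h =>
    hy (zpowers_eq_of_mem_of_orderOf_eq hyf hxy h ▸ mem_zpowers y)
  have hox : orderOf x ≠ 1 := by rwa [Ne, orderOf_eq_one_iff]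
  have hcomp : ∀ d, d ∣ orderOf y → d ∣ orderOf x ∨ orderOf x ∣ d := fun d hd => by
    simpa [orderOf_pow_orderOf_div hyf.orderOf_pos.ne' hd] using
      orderOf_dvd_or_dvd_of_closedNbhd_eq_univ hx (y ^ (orderOf y / d))
  have hφ : φ (orderOf y) ≤ 3 := by
    exact_mod_cast (totient_orderOf_le_encard_eqvClass y).trans (hcard y)
  -- rules out `orderOf y = 6`, whose subgroups of orders 2 and 3 cannot both be comparable
  -- with `⟨x⟩`
  have h2 := hcomp 2
  have h3 := hcomp 3
  have hle := Nat.le_of_dvd hyf.orderOf_pos hdvd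
  rcases Nat.eq_of_totient_le_three hyf.orderOf_pos.ne' hφ with h | h | h | h | h <;>
    rw [h] at hdvd hne hle h2 h3 ⊢ <;> interval_cases orderOf x <;> omega

theorem closedNbhd_powerGraph_eq_zpowers {y : G} (hy : y ∉ zpowers x) :
    closedNbhd (powerGraph G) y = zpowers y := by
  ext w
  rw [mem_closedNbhd_powerGraph_iff]
  refine ⟨fun h => h.elim id fun hyw => ?_, Or.inl⟩
  have hw : w ∉ zpowers x := fun hw => hy (zpowers_le.2 hw hyw)
  have hw4 := (orderOf_eq_two_and_orderOf_eq_four hx hx1 hxf hcard hw).2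
  have hy4 := (orderOf_eq_two_and_orderOf_eq_four hx hx1 hxf hcard hy).2
  have hwf : IsOfFinOrder w := orderOf_pos_iff.1 (by omega)
  rw [SetLike.mem_coe, zpowers_eq_of_mem_of_orderOf_eq hwf hyw (hy4.trans hw4.symm)]
  exact mem_zpowers w

variable [Infinite G]

theorem orderOf_eq_two : orderOf x = 2 :=
  have ⟨_, hy⟩ := (finite_zpowers.2 hxf).infinite_compl.nonempty
  (orderOf_eq_two_and_orderOf_eq_four hx hx1 hxf hcard hy).1

theorem closedNbhd_powerGraph_eq_univ_iff_mem_zpowers {w : G} :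
    closedNbhd (powerGraph G) w = Set.univ ↔ w ∈ zpowers x := by
  refine ⟨fun h => ?_, fun hw => ?_⟩
  · by_contra hw
    have hwf : IsOfFinOrder w := orderOf_pos_iff.1
      (by rw [(orderOf_eq_two_and_orderOf_eq_four hx hx1 hxf hcard hw).2]; norm_num)
    rw [closedNbhd_powerGraph_eq_zpowers hx hx1 hxf hcard hw] at h
    exact Set.infinite_univ (h ▸ finite_zpowers.2 hwf)
  · have h2 : orderOf w ∣ 2 := orderOf_eq_two hx hx1 hxf hcard ▸ orderOf_dvd_of_mem_zpowers hw
    rcases (Nat.dvd_prime Nat.prime_two).1 h2 with h | h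
    · rw [orderOf_eq_one_iff.1 h, closedNbhd_powerGraph_one]
    · rw [closedNbhd_powerGraph_eq_of_zpowers_eq (zpowers_eq_of_mem_of_orderOf_eq hxf hw
        (h.trans (orderOf_eq_two hx hx1 hxf hcard).symm)), hx]

theorem encard_eqvClass_le_two (z : G) : (eqvClass G z).encard ≤ 2 := by
  by_cases hz : closedNbhd (powerGraph G) z = Set.univ
  · calc (eqvClass G z).encard ≤ (zpowers x : Set G).encard := Set.encard_mono fun w hw =>
          (closedNbhd_powerGraph_eq_univ_iff_mem_zpowers hx hx1 hxf hcard).1 (hz ▸ hw)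
      _ = 2 := by rw [hxf.encard_zpowers, orderOf_eq_two hx hx1 hxf hcard]; rfl
  · have hzx : z ∉ zpowers x := fun h =>
      hz ((closedNbhd_powerGraph_eq_univ_iff_mem_zpowers hx hx1 hxf hcard).2 h)
    have hxz : x ∈ zpowers z :=
      (mem_zpowers_or_mem_zpowers_of_closedNbhd_eq_univ hx z).resolve_left hzx
    have hzf : IsOfFinOrder z := orderOf_pos_iff.1
      (by rw [(orderOf_eq_two_and_orderOf_eq_four hx hx1 hxf hcard hzx).2]; norm_num)
    calc (eqvClass G z).encard ≤ ((zpowers z : Set G) \ zpowers x).encard := by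
          refine Set.encard_mono fun w (hw : closedNbhd _ w = _) => ⟨?_, fun hwx => hz ?_⟩
          · rw [← closedNbhd_powerGraph_eq_zpowers hx hx1 hxf hcard hzx, ← hw]
            exact mem_closedNbhd_powerGraph_iff.2 (Or.inl (mem_zpowers w))
          · rw [← hw]
            exact (closedNbhd_powerGraph_eq_univ_iff_mem_zpowers hx hx1 hxf hcard).2 hwx
      _ = 2 := by
          rw [Set.encard_sdiff (zpowers_le.2 hxz) (finite_zpowers.2 hxf), hxf.encard_zpowers,
            hzf.encard_zpowers, orderOf_eq_two hx hx1 hxf hcard,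
            (orderOf_eq_two_and_orderOf_eq_four hx hx1 hxf hcard hzx).2]
          rfl

end Torsion

section InfiniteOrder

variable {G : Type*} [Group G] {g : G}

theorem zpow_mem_zpowers_zpow_iff (hg : ¬IsOfFinOrder g) {a b : ℤ} :
    g ^ b ∈ zpowers (g ^ a) ↔ a ∣ b := by
  simp only [mem_zpowers_iff, ← zpow_mul, (injective_zpow_iff_not_isOfFinOrder.2 hg).eq_iff,
    Dvd.dvd, eq_comm]

theorem zpow_mem_closedNbhd_zpow_iff (hg : ¬IsOfFinOrder g) {a b : ℤ} :
    g ^ b ∈ closedNbhd (powerGraph G) (g ^ a) ↔ a ∣ b ∨ b ∣ a := by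
  rw [mem_closedNbhd_powerGraph_iff, zpow_mem_zpowers_zpow_iff hg, zpow_mem_zpowers_zpow_iff hg]

theorem natAbs_le_one_of_closedNbhd_zpow_eq_univ (hg : ¬IsOfFinOrder g) {a : ℤ}
    (h : closedNbhd (powerGraph G) (g ^ a) = Set.univ) : a.natAbs ≤ 1 :=
  Int.natAbs_le_one_of_dvd_or_dvd_two_mul_add_one <|
    (zpow_mem_closedNbhd_zpow_iff hg).1 (h ▸ Set.mem_univ (g ^ (2 * a + 1)))

theorem eq_or_eq_neg_of_closedNbhd_zpow_eq (hg : ¬IsOfFinOrder g) {a b : ℤ} (hab : a ∣ b)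
    (hb : b ≠ 0) (h : closedNbhd (powerGraph G) (g ^ a) = closedNbhd (powerGraph G) (g ^ b)) :
    b = a ∨ b = -a := by
  obtain ⟨k, rfl⟩ := hab
  have ha : a ≠ 0 := left_ne_zero_of_mul hb
  have hk : k ≠ 0 := right_ne_zero_of_mul hb
  have hmem : g ^ (a * (2 * k + 1)) ∈ closedNbhd (powerGraph G) (g ^ (a * k)) :=
    h ▸ (zpow_mem_closedNbhd_zpow_iff hg).2 (Or.inl (dvd_mul_right _ _))
  rw [zpow_mem_closedNbhd_zpow_iff hg, mul_dvd_mul_iff_left ha, mul_dvd_mul_iff_left ha] at hmem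
  have := Int.natAbs_le_one_of_dvd_or_dvd_two_mul_add_one hmem
  have : k = 1 ∨ k = -1 := by omega
  rcases this with rfl | rfl <;> simp

theorem zpowers_eq_top_of_closedNbhd_eq_univ {x : G}
    (hx : closedNbhd (powerGraph G) x = Set.univ) (hxf : ¬IsOfFinOrder x) : zpowers x = ⊤ := by
  refine (eq_top_iff' _).2 fun y => by_contra fun hy => ?_
  obtain ⟨n, rfl⟩ := (mem_zpowers_or_mem_zpowers_of_closedNbhd_eq_univ hx y).resolve_left hy
  have hy0 : ¬IsOfFinOrder y := fun hyf => hxf hyf.zpow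
  have hn := natAbs_le_one_of_closedNbhd_zpow_eq_univ hy0 hx
  rw [mem_zpowers_zpow_iff, orderOf_eq_zero_iff.2 hy0, Nat.cast_zero, Int.gcd_zero_right] at hy
  have hn0 : n ≠ 0 := by rintro rfl; exact hxf (by simp)
  omega

theorem closedNbhd_zpow_eq_iff (hg : ¬IsOfFinOrder g) {a b : ℤ} (ha : 1 < a.natAbs) :
    closedNbhd (powerGraph G) (g ^ b) = closedNbhd (powerGraph G) (g ^ a) ↔ b = a ∨ b = -a := by
  refine ⟨fun h => ?_, ?_⟩
  · have hb : b ≠ 0 := by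
      rintro rfl
      have := natAbs_le_one_of_closedNbhd_zpow_eq_univ hg
        (h ▸ zpow_zero g ▸ closedNbhd_powerGraph_one)
      omega
    have hmem : g ^ b ∈ closedNbhd (powerGraph G) (g ^ a) := h ▸ Set.mem_insert _ _
    rcases (zpow_mem_closedNbhd_zpow_iff hg).1 hmem with hab | hba
    · exact eq_or_eq_neg_of_closedNbhd_zpow_eq hg hab hb h.symm
    · rcases eq_or_eq_neg_of_closedNbhd_zpow_eq hg hba (by omega) h with rfl | rfl <;> simp
  · rintro (rfl | rfl)
    · rfl
    · exact closedNbhd_powerGraph_eq_of_zpowers_eq (by rw [zpow_neg, zpowers_inv])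

end InfiniteOrder

section InfiniteCyclic

variable {G : Type*} [Group G] {g : G} (hg : ¬IsOfFinOrder g) (hgen : ∀ y : G, y ∈ zpowers g)
include hg hgen

theorem closedNbhd_zpow_eq_univ_iff {a : ℤ} :
    closedNbhd (powerGraph G) (g ^ a) = Set.univ ↔ a.natAbs ≤ 1 := by
  refine ⟨natAbs_le_one_of_closedNbhd_zpow_eq_univ hg,
    fun ha => Set.eq_univ_of_forall fun y => ?_⟩
  obtain ⟨b, rfl⟩ := mem_zpowers_iff.1 (hgen y)
  rw [zpow_mem_closedNbhd_zpow_iff hg]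
  have : a = 0 ∨ a = 1 ∨ a = -1 := by omega
  rcases this with rfl | rfl | rfl <;> simp

theorem eqvClass_zpow_of_natAbs_le_one {a : ℤ} (ha : a.natAbs ≤ 1) :
    eqvClass G (g ^ a) = (fun n : ℤ => g ^ n) '' {-1, 0, 1} := by
  ext y
  obtain ⟨b, rfl⟩ := mem_zpowers_iff.1 (hgen y)
  rw [(injective_zpow_iff_not_isOfFinOrder.2 hg).mem_set_image]
  change closedNbhd _ _ = closedNbhd _ _ ↔ _
  rw [(closedNbhd_zpow_eq_univ_iff hg hgen).2 ha, closedNbhd_zpow_eq_univ_iff hg hgen]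
  simp only [Set.mem_insert_iff, Set.mem_singleton_iff]
  omega

theorem eqvClass_zpow_of_one_lt_natAbs {a : ℤ} (ha : 1 < a.natAbs) :
    eqvClass G (g ^ a) = (fun n : ℤ => g ^ n) '' {a, -a} := by
  ext y
  obtain ⟨b, rfl⟩ := mem_zpowers_iff.1 (hgen y)
  rw [(injective_zpow_iff_not_isOfFinOrder.2 hg).mem_set_image]
  exact closedNbhd_zpow_eq_iff hg ha

theorem card_eqvClass_zpow_of_natAbs_le_one {a : ℤ} (ha : a.natAbs ≤ 1) :
    Nat.card (eqvClass G (g ^ a)) = 3 := by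
  rw [eqvClass_zpow_of_natAbs_le_one hg hgen ha,
    Nat.card_image_of_injective (injective_zpow_iff_not_isOfFinOrder.2 hg), Nat.card_coe_set_eq,
    Set.ncard_eq_three]
  exact ⟨-1, 0, 1, by norm_num⟩

theorem card_eqvClass_zpow_of_one_lt_natAbs {a : ℤ} (ha : 1 < a.natAbs) :
    Nat.card (eqvClass G (g ^ a)) = 2 := by
  rw [eqvClass_zpow_of_one_lt_natAbs hg hgen ha,
    Nat.card_image_of_injective (injective_zpow_iff_not_isOfFinOrder.2 hg), Nat.card_coe_set_eq,
    Set.ncard_pair (by omega)]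

theorem card_eqvClass_eq_two_or_three (y : G) :
    Nat.card (eqvClass G y) = 2 ∨ Nat.card (eqvClass G y) = 3 := by
  obtain ⟨a, rfl⟩ := mem_zpowers_iff.1 (hgen y)
  rcases le_or_gt a.natAbs 1 with ha | ha
  · exact Or.inr (card_eqvClass_zpow_of_natAbs_le_one hg hgen ha)
  · exact Or.inl (card_eqvClass_zpow_of_one_lt_natAbs hg hgen ha)

theorem existsUnique_card_eqvClass_eq_three :
    ∃! c : Set G, (∃ x : G, c = eqvClass G x) ∧ Nat.card c = 3 := by
  refine ⟨eqvClass G (g ^ (0 : ℤ)),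
    ⟨⟨_, rfl⟩, card_eqvClass_zpow_of_natAbs_le_one hg hgen zero_le_one⟩, ?_⟩
  rintro _ ⟨⟨y, rfl⟩, hc⟩
  obtain ⟨a, rfl⟩ := mem_zpowers_iff.1 (hgen y)
  have ha : a.natAbs ≤ 1 := by
    by_contra ha
    rw [card_eqvClass_zpow_of_one_lt_natAbs hg hgen (by omega)] at hc
    exact absurd hc (by norm_num)
  rw [eqvClass_zpow_of_natAbs_le_one hg hgen ha,
    eqvClass_zpow_of_natAbs_le_one hg hgen zero_le_one]

theorem infinite_setOf_card_eqvClass_eq_two :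
    {c : Set G | (∃ x : G, c = eqvClass G x) ∧ Nat.card c = 2}.Infinite := by
  refine Set.infinite_of_injective_forall_mem (f := fun n : ℕ => eqvClass G (g ^ ((n : ℤ) + 2)))
    (fun m n hmn => ?_)
    fun n => ⟨⟨_, rfl⟩, card_eqvClass_zpow_of_one_lt_natAbs hg hgen (by omega)⟩
  simp only at hmn
  have hm : g ^ ((m : ℤ) + 2) ∈ eqvClass G (g ^ ((n : ℤ) + 2)) := hmn ▸ rfl
  have := (closedNbhd_zpow_eq_iff hg (by omega)).1 hm
  omega

end InfiniteCyclic

theorem MulEquiv.not_isOfFinOrder_symm_ofAdd_one {G : Type*} [Group G]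
    (e : G ≃* Multiplicative ℤ) : ¬IsOfFinOrder (e.symm (Multiplicative.ofAdd 1)) := fun h =>
  not_isOfFinOrder_of_isMulTorsionFree (a := Multiplicative.ofAdd (1 : ℤ)) (by simp)
    (by simpa using e.toMonoidHom.isOfFinOrder h)

theorem MulEquiv.mem_zpowers_symm_ofAdd_one {G : Type*} [Group G]
    (e : G ≃* Multiplicative ℤ) (y : G) : y ∈ zpowers (e.symm (Multiplicative.ofAdd 1)) :=
  ⟨(e y).toAdd, by simp [← map_zpow, ← ofAdd_zsmul]⟩

/-- Suppose the center of the power graph of `G` has more than one element. Then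
`G ≅ (ℤ,+)` iff `G` is the union of countably many `≡_G`-classes of cardinality `2`
together with exactly one `≡_G`-class of cardinality `3`. -/
theorem iso_int_iff_eqvClasses {G : Type*} [Group G]
    (h : (graphCenter (powerGraph G)).Nontrivial) :
    Nonempty (G ≃* Multiplicative ℤ) ↔
      ((∀ x : G, Nat.card (eqvClass G x) = 2 ∨ Nat.card (eqvClass G x) = 3) ∧
        (∃! c : Set G, (∃ x : G, c = eqvClass G x) ∧ Nat.card c = 3) ∧
        {c : Set G | (∃ x : G, c = eqvClass G x) ∧ Nat.card c = 2}.Countable ∧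
        {c : Set G | (∃ x : G, c = eqvClass G x) ∧ Nat.card c = 2}.Infinite) := by
  constructor
  · rintro ⟨e⟩
    have hg := e.not_isOfFinOrder_symm_ofAdd_one
    have hgen := e.mem_zpowers_symm_ofAdd_one
    have : Countable G := Function.Surjective.countable fun y => mem_zpowers_iff.1 (hgen y)
    exact ⟨card_eqvClass_eq_two_or_three hg hgen, existsUnique_card_eqvClass_eq_three hg hgen,
      (Set.countable_range (eqvClass G)).mono fun _ hc => hc.1.imp fun _ => Eq.symm,
      infinite_setOf_card_eqvClass_eq_two hg hgen⟩
  · rintro ⟨hcard, ⟨c, ⟨⟨z, rfl⟩, hz⟩, -⟩, -, hinf⟩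
    have : Infinite G := not_finite_iff_infinite.1 fun _ => hinf (Set.toFinite _)
    obtain ⟨x, hx, hx1⟩ := h.exists_ne 1
    rw [mem_graphCenter_iff] at hx
    by_cases hxf : IsOfFinOrder x
    · have hcard3 (y : G) : (eqvClass G y).encard ≤ 3 := by
        rcases hcard y with h | h <;> rw [Set.encard_eq_natCard (by omega), h] <;> norm_num
      have := encard_eqvClass_le_two hx hx1 hxf hcard3 z
      rw [Set.encard_eq_natCard (by omega), hz] at this
      norm_num at this
    · exact ⟨(intEquivOfZPowersEqTop x (zpowers_eq_top_of_closedNbhd_eq_univ hx hxf)).symm⟩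
end

section
/- Let G be a torsion-free group in which every non-identity element is contained in a unique maximal cyclic subgroup, and let x, y ∈ G with x ∉ {y, y⁻¹} be adjacent in the Z±-power graph 𝒢±(G). Then y = x^n for some nonzero integer n if and only if the set S_G(x,y), consisting of the vertices lying in the closed neighborhood of y but not in the closed neighborhood of x in 𝒢±(G), is finite. -/
set_option linter.unusedVariables false

/-- A monoid is torsion-free if no non-identity element has finite order
(the definition `Monoid.IsTorsionFree` of the older Mathlib, since removed). -/
def Monoid.IsTorsionFree (G : Type*) [Monoid G] : Prop :=
  ∀ g : G, g ≠ 1 → ¬IsOfFinOrder g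

/-!
If `y = x ^ n`, every vertex of `N[y] \ N[x]` is a root of `y`; the roots of `y ≠ 1` all lie in
the unique maximal cyclic subgroup `⟨c⟩` containing `y = c ^ b`, and are powers `c ^ k` with
`k ∣ b`, so there are finitely many. Otherwise `x = y ^ n` with `|n| ≥ 2`, and `y ^ k` lies in
`N[y] \ N[x]` for each of the infinitely many `k` with `|n| < |k|` and `n ∤ k`.
-/

def Subgroup.IsMaximalCyclic {G : Type*} [Group G] (C : Subgroup G) : Prop :=
  IsCyclic C ∧ ∀ D : Subgroup G, IsCyclic D → C ≤ D → C = D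

lemma Int.infinite_setOf_abs_lt_abs_and_not_dvd {n : ℤ} (hn : 2 ≤ |n|) :
    {k : ℤ | |n| < |k| ∧ ¬n ∣ k}.Infinite := by
  refine Set.infinite_of_forall_exists_gt fun a => ⟨|n| * (|a| + 1) + 1, ⟨?_, ?_⟩, ?_⟩
  · refine lt_of_lt_of_le ?_ (le_abs_self _)
    nlinarith [abs_nonneg a]
  · intro h
    have h1 : n ∣ 1 := (Int.dvd_add_right ((self_dvd_abs n).mul_right _)).1 h
    have := Int.le_of_dvd one_pos ((abs_dvd n 1).2 h1)
    omega
  · nlinarith [le_abs_self a, abs_nonneg a]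

section ZpmPowerGraph

variable {G : Type*} [Group G]

lemma mem_closedNbhd_zpmPowerGraph_iff {x z : G} :
    z ∈ closedNbhd (zpmPowerGraph G) x ↔ ∃ m : ℤ, m ≠ 0 ∧ (z = x ^ m ∨ x = z ^ m) := by
  constructor
  · rintro (rfl | ⟨-, h⟩)
    · exact ⟨1, one_ne_zero, Or.inl (zpow_one z).symm⟩
    · exact h
  · intro h
    by_cases hzx : z = x
    · exact Or.inl hzx
    · exact Or.inr ⟨Ne.symm hzx, h⟩

lemma zpow_mem_closedNbhd_zpmPowerGraph (x : G) {m : ℤ} (hm : m ≠ 0) :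
    x ^ m ∈ closedNbhd (zpmPowerGraph G) x :=
  mem_closedNbhd_zpmPowerGraph_iff.2 ⟨m, hm, Or.inl rfl⟩

lemma closedNbhd_zpow_diff_closedNbhd_subset_setOf_zpow_eq {x : G} {n : ℤ} (hn : n ≠ 0) :
    closedNbhd (zpmPowerGraph G) (x ^ n) \ closedNbhd (zpmPowerGraph G) x ⊆
      {z | ∃ m : ℤ, z ^ m = x ^ n} := by
  rintro z ⟨hzy, hzx⟩
  obtain ⟨m, hm, rfl | h⟩ := mem_closedNbhd_zpmPowerGraph_iff.1 hzy
  · rw [← zpow_mul] at hzx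
    exact absurd (zpow_mem_closedNbhd_zpmPowerGraph x (mul_ne_zero hn hm)) hzx
  · exact ⟨m, h.symm⟩

lemma zpow_mem_closedNbhd_diff_closedNbhd_zpow {y : G} (hy : ¬IsOfFinOrder y) {n k : ℤ}
    (hnk : |n| < |k|) (hdvd : ¬n ∣ k) :
    y ^ k ∈ closedNbhd (zpmPowerGraph G) y \ closedNbhd (zpmPowerGraph G) (y ^ n) := by
  have hinj := injective_zpow_iff_not_isOfFinOrder.2 hy
  have hk : k ≠ 0 := by rintro rfl; exact (abs_nonneg n).not_gt (by simpa using hnk)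
  refine ⟨zpow_mem_closedNbhd_zpmPowerGraph y hk, fun hx => ?_⟩
  obtain ⟨m, hm, h | h⟩ := mem_closedNbhd_zpmPowerGraph_iff.1 hx
  · exact hdvd ⟨m, hinj (show y ^ k = y ^ (n * m) by rw [h, zpow_mul])⟩
  · have hnkm : n = k * m := hinj (show y ^ n = y ^ (k * m) by rw [h, zpow_mul])
    rw [hnkm, abs_mul] at hnk
    nlinarith [Int.one_le_abs hm, abs_nonneg k]

lemma closedNbhd_diff_closedNbhd_zpow_infinite {y : G} (hy : ¬IsOfFinOrder y) {n : ℤ}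
    (hn : 2 ≤ |n|) :
    (closedNbhd (zpmPowerGraph G) y \ closedNbhd (zpmPowerGraph G) (y ^ n)).Infinite := by
  refine ((Int.infinite_setOf_abs_lt_abs_and_not_dvd hn).image
    (injective_zpow_iff_not_isOfFinOrder.2 hy).injOn).mono ?_
  rintro _ ⟨k, ⟨hnk, hdvd⟩, rfl⟩
  exact zpow_mem_closedNbhd_diff_closedNbhd_zpow hy hnk hdvd

lemma ne_one_of_zpmPowerGraph_adj (hG : Monoid.IsTorsionFree G) {x y : G}
    (h : (zpmPowerGraph G).Adj x y) : y ≠ 1 := by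
  rintro rfl
  obtain ⟨hx1, n, hn, hx | hx⟩ := h
  · exact hG x hx1 (isOfFinOrder_iff_zpow_eq_one.2 ⟨n, hn, hx.symm⟩)
  · exact hx1 (by rw [hx, one_zpow])

end ZpmPowerGraph

section Roots

variable {G : Type*} [Group G]

lemma finite_setOf_mem_zpowers_zpow_eq_zpow {c : G} (hc : ¬IsOfFinOrder c) {b : ℤ} (hb : b ≠ 0) :
    {z ∈ Subgroup.zpowers c | ∃ m : ℤ, z ^ m = c ^ b}.Finite := by
  refine ((Int.divisors b).finite_toSet.image (c ^ ·)).subset ?_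
  rintro z ⟨hz, m, hzm⟩
  obtain ⟨k, rfl⟩ := Subgroup.mem_zpowers_iff.1 hz
  have hkm : b = k * m := injective_zpow_iff_not_isOfFinOrder.2 hc
    (show c ^ b = c ^ (k * m) by rw [zpow_mul, hzm])
  exact ⟨k, Int.mem_divisors.2 ⟨⟨m, hkm⟩, hb⟩, rfl⟩

lemma mem_of_zpow_mem_of_isMaximalCyclic
    (huniq : ∀ g : G, g ≠ 1 → ∃! C : Subgroup G, C.IsMaximalCyclic ∧ g ∈ C)
    {C : Subgroup G} (hC : C.IsMaximalCyclic) {y z : G} (hy : y ≠ 1) (hyC : y ∈ C) {m : ℤ}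
    (hzm : z ^ m = y) : z ∈ C := by
  have hz : z ≠ 1 := by rintro rfl; exact hy (by rw [← hzm, one_zpow])
  obtain ⟨D, ⟨hD, hzD⟩, -⟩ := huniq z hz
  have hyD : y ∈ D := hzm ▸ zpow_mem hzD m
  exact (huniq y hy).unique ⟨hD, hyD⟩ ⟨hC, hyC⟩ ▸ hzD

lemma finite_setOf_zpow_eq (hG : Monoid.IsTorsionFree G)
    (huniq : ∀ g : G, g ≠ 1 → ∃! C : Subgroup G, C.IsMaximalCyclic ∧ g ∈ C)
    {y : G} (hy : y ≠ 1) : {z : G | ∃ m : ℤ, z ^ m = y}.Finite := by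
  obtain ⟨C, ⟨hC, hyC⟩, -⟩ := huniq y hy
  obtain ⟨c, rfl⟩ := (Subgroup.isCyclic_iff_exists_zpowers_eq_top C).1 hC.1
  obtain ⟨b, rfl⟩ := Subgroup.mem_zpowers_iff.1 hyC
  have hc : c ≠ 1 := by rintro rfl; exact hy (one_zpow b)
  have hb : b ≠ 0 := by rintro rfl; exact hy (zpow_zero c)
  refine (finite_setOf_mem_zpowers_zpow_eq_zpow (hG c hc) hb).subset ?_
  rintro z ⟨m, hzm⟩
  exact ⟨mem_of_zpow_mem_of_isMaximalCyclic huniq hC hy hyC hzm, m, hzm⟩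

end Roots

/-- In a torsion-free group in which every non-identity element lies in a unique maximal cyclic
subgroup, for adjacent `x, y` in the Z±-power graph with `x ∉ {y, y⁻¹}`: `y` is a nonzero power
of `x` iff the set of vertices in the closed neighborhood of `y` but not of `x` is finite. -/
theorem dir_iff_S_finite {G : Type*} [Group G] (hG : Monoid.IsTorsionFree G)
    (huniq : ∀ g : G, g ≠ 1 → ∃! C : Subgroup G,
      (IsCyclic C ∧ ∀ D : Subgroup G, IsCyclic D → C ≤ D → C = D) ∧ g ∈ C)
    (x y : G) (hxy : x ≠ y ∧ x ≠ y⁻¹) (hadj : (zpmPowerGraph G).Adj x y) :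
    (∃ n : ℤ, n ≠ 0 ∧ y = x ^ n) ↔
      (closedNbhd (zpmPowerGraph G) y \ closedNbhd (zpmPowerGraph G) x).Finite := by
  have hy : y ≠ 1 := ne_one_of_zpmPowerGraph_adj hG hadj
  constructor
  · rintro ⟨n, hn, rfl⟩
    exact (finite_setOf_zpow_eq hG huniq hy).subset (closedNbhd_zpow_diff_closedNbhd_subset_setOf_zpow_eq hn)
  · intro hfin
    obtain ⟨-, n, hn, hyx | rfl⟩ := hadj
    · exact ⟨n, hn, hyx⟩
    · have hn1 : n ≠ 1 := by rintro rfl; exact hxy.1 (zpow_one y)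
      have hn1' : n ≠ -1 := by rintro rfl; exact hxy.2 (zpow_neg_one y)
      have hn2 : 2 ≤ |n| := by rcases abs_cases n with ⟨h, _⟩ | ⟨h, _⟩ <;> omega
      exact absurd hfin (closedNbhd_diff_closedNbhd_zpow_infinite (hG y hy) hn2)
end

section
/- Let G be a torsion-free group, let H be a group, and let φ : G → H be an isomorphism from the Z±-power graph 𝒢±(G) to 𝒢±(H). Let z be a non-identity element of G. Then φ maps M_G(z) bijectively onto M_H(φ(z)) inducing an isomorphism between the subgraphs of the complements of 𝒢±(G) and 𝒢±(H) induced by M_G(z) and M_H(φ(z)) respectively; moreover, the subgraph of the complement of 𝒢±(G) induced by I_G(z) is isomorphic to the subgraph of the complement of 𝒢±(H) induced by I_H(φ(z)), and the subgraph induced by O_G(z) is isomorphic to the subgraph induced by O_H(φ(z)). -/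
set_option linter.unusedVariables false

/-- `O_G(x)`: the direct successors of `x` in the directed Z±-power graph, excluding `x⁻¹`. -/
def Osucc {G : Type*} [Group G] (x : G) : Set G :=
  {y | y ≠ x ∧ y ≠ x⁻¹ ∧ ∃ n : ℤ, n ≠ 0 ∧ y = x ^ n}

/-- `I_G(x)`: the direct predecessors of `x` in the directed Z±-power graph, excluding `x⁻¹`. -/
def Ipred {G : Type*} [Group G] (x : G) : Set G :=
  {y | y ≠ x ∧ y ≠ x⁻¹ ∧ ∃ n : ℤ, n ≠ 0 ∧ x = y ^ n}

/-- `M_G(x) = I_G(x) ∪ O_G(x)`: the neighbors of `x` in the Z±-power graph, excluding `x⁻¹`. -/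
def Mnbr {G : Type*} [Group G] (x : G) : Set G :=
  Ipred x ∪ Osucc x

/-!
In a torsion-free group the closed neighbourhood of `x ≠ 1` in `𝒢±` is shared only by `x` and
`x⁻¹`. In any group, an element of finite order `d ≥ 7` shares its closed neighbourhood with at
least three of its powers, and adjacent elements of the same finite order share theirs. So if
`φ g` had finite order, the images of the clique `g, g², g⁴, …, g⁶⁴` would have seven distinct
orders, all at most `6`. Hence `φ z` has infinite order, `φ` sends `z⁻¹` to `(φ z)⁻¹`, and `M(z)`
onto `M(φ z)`.

For `x` of infinite order, every element of `I(x)` is adjacent to every element of `O(x)`, while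
any two elements of `O(x)` have a common non-neighbour `x ^ p`, `p` a large prime. So `φ` maps
`O(z)` into one side of `M(φ z)`, and `φ⁻¹` maps `O(φ z)` into one side of `M(z)`. If
`φ (O(z)) ⊆ I(φ z)`, a finiteness argument gives `φ (I(z)) = O(φ z)`, and then
`I(z) ≅ O(φ z) ≅ O(z) ≅ I(φ z)`: the complement graph on `O(x)` is, through `n ↦ x ^ n`, the same
for every `x` of infinite order.
-/

open Function Set Subgroup SimpleGraph

local notation "𝒢±" => zpmPowerGraph

namespace SimpleGraph

variable {V W : Type*} {Γ : SimpleGraph V} {Γ' : SimpleGraph W}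

lemma mem_closedNbhd_iff {x y : V} : y ∈ closedNbhd Γ x ↔ y = x ∨ Γ.Adj x y := Iff.rfl

lemma Iso.image_closedNbhd (φ : Γ ≃g Γ') (x : V) : φ '' closedNbhd Γ x = closedNbhd Γ' (φ x) := by
  ext v
  obtain ⟨y, rfl⟩ := φ.surjective v
  rw [φ.injective.mem_set_image, mem_closedNbhd_iff, mem_closedNbhd_iff, φ.injective.eq_iff,
    φ.map_adj_iff]

lemma Iso.closedNbhd_eq_iff (φ : Γ ≃g Γ') {a b : V} :
    closedNbhd Γ' (φ a) = closedNbhd Γ' (φ b) ↔ closedNbhd Γ a = closedNbhd Γ b := by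
  rw [← φ.image_closedNbhd, ← φ.image_closedNbhd, (image_injective.2 φ.injective).eq_iff]

lemma Iso.symm_image_eq (φ : Γ ≃g Γ') {s : Set V} {t : Set W} (h : φ '' s = t) :
    φ.symm '' t = s := by
  rw [← h]
  exact φ.toEquiv.symm_image_image s

noncomputable def Embedding.induceIsoOfImageEq (f : Γ ↪g Γ') {s : Set V} {t : Set W}
    (h : f '' s = t) : Γ.induce s ≃g Γ'.induce t where
  toEquiv := (Equiv.Set.image f s f.injective).trans (Equiv.setCongr h)
  map_rel_iff' := f.map_adj_iff

end SimpleGraph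

lemma Set.image_eq_of_image_union_eq {α β : Type*} {f : α → β} (hf : Injective f)
    {s₁ s₂ : Set α} {t₁ t₂ : Set β} (hs : Disjoint s₁ s₂) (ht : Disjoint t₁ t₂)
    (h : f '' (s₁ ∪ s₂) = t₁ ∪ t₂) (h₂ : f '' s₂ = t₂) : f '' s₁ = t₁ := by
  have hs' : (s₁ ∪ s₂) \ s₂ = s₁ := hs.sup_sdiff_cancel_right
  rw [← hs', image_sdiff hf, h, h₂]
  exact ht.sup_sdiff_cancel_right

lemma Int.not_dvd_prime_or_prime_dvd {n : ℤ} {p : ℕ} (hp : p.Prime) (hn : 2 ≤ n.natAbs)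
    (hnp : n.natAbs < p) : ¬(n ∣ p ∨ (p : ℤ) ∣ n) := by
  rintro (h | h)
  · have := (Nat.dvd_prime hp).1 (Int.natAbs_dvd_natAbs.2 h)
    omega
  · have := Int.natAbs_le_of_dvd_ne_zero h (by omega)
    omega

lemma Nat.exists_coprime_between {d : ℕ} (hd : 7 ≤ d) :
    ∃ j, j.Coprime d ∧ 1 < j ∧ j < d - 1 := by
  obtain ⟨m, rfl | rfl⟩ := Nat.even_or_odd' d
  · obtain ⟨k, rfl | rfl⟩ := Nat.even_or_odd' m
    · refine ⟨2 * k + 1, Nat.Coprime.mul_right ?_ ?_, by omega, by omega⟩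
      · exact Nat.coprime_two_right.2 (odd_two_mul_add_one k)
      · simp [add_comm]
    · refine ⟨2 * k + 3, Nat.Coprime.mul_right ?_ ?_, by omega, by omega⟩
      · exact Nat.coprime_two_right.2 ⟨k + 1, by ring⟩
      · rw [show 2 * k + 3 = 2 + (2 * k + 1) by ring, Nat.coprime_add_self_left]
        exact Nat.coprime_two_left.2 (odd_two_mul_add_one k)
  · exact ⟨2, Nat.coprime_two_left.2 (odd_two_mul_add_one m), by omega, by omega⟩

section Group

variable {G H K L : Type*} [Group G] [Group H] [Group K] [Group L]

lemma zpow_mem_closedNbhd (x : K) {n : ℤ} (hn : n ≠ 0) : x ^ n ∈ closedNbhd (𝒢± K) x := by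
  by_cases h : x ^ n = x
  · exact Or.inl h
  · exact Or.inr ⟨Ne.symm h, n, hn, Or.inl rfl⟩

lemma not_adj_zpow {x : K} (hx : ¬IsOfFinOrder x) {a b : ℤ} (h : ¬(a ∣ b ∨ b ∣ a)) :
    ¬(𝒢± K).Adj (x ^ a) (x ^ b) := by
  have hinj := injective_zpow_iff_not_isOfFinOrder.2 hx
  rintro ⟨-, n, -, hn | hn⟩ <;> rw [← zpow_mul] at hn <;> apply h
  · exact Or.inl ⟨n, hinj hn⟩
  · exact Or.inr ⟨n, hinj hn⟩

lemma IsOfFinOrder.of_adj {w y : K} (hw : IsOfFinOrder w) (h : (𝒢± K).Adj w y) :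
    IsOfFinOrder y := by
  obtain ⟨-, n, hn, rfl | rfl⟩ := h
  · exact hw.zpow
  · obtain ⟨k, hk, hk1⟩ := isOfFinOrder_iff_zpow_eq_one.1 hw
    exact isOfFinOrder_iff_zpow_eq_one.2 ⟨n * k, mul_ne_zero hn hk, by rw [zpow_mul, hk1]⟩

lemma closedNbhd_subset_of_mem_zpowers {a x : K} (ha : a ∈ zpowers x) (hx : x ∈ zpowers a) :
    closedNbhd (𝒢± K) x ⊆ closedNbhd (𝒢± K) a := by
  obtain ⟨i, rfl⟩ := mem_zpowers_iff.1 ha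
  obtain ⟨j, hj⟩ := mem_zpowers_iff.1 hx
  by_cases hax : x ^ i = x
  · rw [hax]
  have hi : i ≠ 0 := by
    rintro rfl
    simp only [zpow_zero, one_zpow] at hj hax
    exact hax hj
  have hj0 : j ≠ 0 := by
    rintro rfl
    rw [zpow_zero] at hj
    simp [← hj] at hax
  rintro c (rfl | ⟨-, n, hn, hc | hc⟩)
  · exact Or.inr ⟨hax, j, hj0, Or.inl hj.symm⟩
  all_goals
    by_cases hca : c = x ^ i
    · exact Or.inl hca
  · exact Or.inr ⟨Ne.symm hca, j * n, mul_ne_zero hj0 hn, Or.inl (by rw [hc, zpow_mul, hj])⟩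
  · exact Or.inr ⟨Ne.symm hca, n * i, mul_ne_zero hn hi, Or.inr (by rw [hc, zpow_mul])⟩

lemma closedNbhd_eq_of_mem_zpowers {a x : K} (ha : a ∈ zpowers x) (hx : x ∈ zpowers a) :
    closedNbhd (𝒢± K) a = closedNbhd (𝒢± K) x :=
  (closedNbhd_subset_of_mem_zpowers hx ha).antisymm (closedNbhd_subset_of_mem_zpowers ha hx)

lemma closedNbhd_inv (x : K) : closedNbhd (𝒢± K) x⁻¹ = closedNbhd (𝒢± K) x :=
  closedNbhd_eq_of_mem_zpowers (inv_mem (mem_zpowers x)) (zpowers_inv (g := x) ▸ mem_zpowers x)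

lemma closedNbhd_pow_of_coprime {b : K} {m : ℕ} (h : m.Coprime (orderOf b)) :
    closedNbhd (𝒢± K) (b ^ m) = closedNbhd (𝒢± K) b := by
  obtain ⟨k, hk⟩ := exists_pow_eq_self_of_coprime h
  exact closedNbhd_eq_of_mem_zpowers (pow_mem (mem_zpowers b) m)
    (mem_zpowers_iff.2 ⟨k, by rw [zpow_natCast, hk]⟩)

lemma closedNbhd_eq_of_mem_zpowers_of_orderOf_eq {a b : K} (ha : IsOfFinOrder a)
    (hb : b ∈ zpowers a) (hord : orderOf b = orderOf a) :
    closedNbhd (𝒢± K) b = closedNbhd (𝒢± K) a := by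
  have := ha.finite_zpowers.to_subtype
  have heq : zpowers b = zpowers a :=
    eq_of_le_of_card_ge (zpowers_le.2 hb) (by rw [Nat.card_zpowers, Nat.card_zpowers, hord])
  exact closedNbhd_eq_of_mem_zpowers hb (heq ▸ mem_zpowers a)

lemma orderOf_ne_of_adj {a b : K} (ha : IsOfFinOrder a) (hab : (𝒢± K).Adj a b)
    (h : closedNbhd (𝒢± K) a ≠ closedNbhd (𝒢± K) b) : orderOf a ≠ orderOf b := by
  intro hord
  have hb := ha.of_adj hab
  obtain ⟨-, n, -, hn | hn⟩ := hab
  · exact h (closedNbhd_eq_of_mem_zpowers_of_orderOf_eq ha ⟨n, hn.symm⟩ hord.symm).symm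
  · exact h (closedNbhd_eq_of_mem_zpowers_of_orderOf_eq hb ⟨n, hn.symm⟩ hord)

/-- An element `b` of order `d ≥ 7` shares its closed neighbourhood with the three distinct powers
`b`, `b ^ j` and `b ^ (d - 1)`, where `1 < j < d - 1` is coprime to `d`. -/
lemma orderOf_le_six {b p q : K} (hb : IsOfFinOrder b)
    (h : ∀ c, closedNbhd (𝒢± K) c = closedNbhd (𝒢± K) b → c = p ∨ c = q) : orderOf b ≤ 6 := by
  classical
  by_contra! hd
  obtain ⟨j, hj, h1j, hjd⟩ := Nat.exists_coprime_between hd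
  have hmaps : MapsTo (b ^ ·) (({1, j, orderOf b - 1} : Finset ℕ) : Set ℕ)
      (({p, q} : Finset K) : Set K) := by
    intro m hm
    have hcop : m.Coprime (orderOf b) := by
      simp only [Finset.coe_insert, Finset.coe_singleton, mem_insert_iff, mem_singleton_iff] at hm
      rcases hm with rfl | rfl | rfl
      · exact Nat.coprime_one_left _
      · exact hj
      · exact (Nat.coprime_self_sub_left hb.orderOf_pos).2 (Nat.coprime_one_left _)
    simpa using h _ (closedNbhd_pow_of_coprime hcop)
  have hcard : ({p, q} : Finset K).card < ({1, j, orderOf b - 1} : Finset ℕ).card := by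
    rw [Finset.card_eq_three.2 ⟨1, j, orderOf b - 1, by omega, by omega, by omega, rfl⟩]
    exact Finset.card_le_two.trans_lt (by norm_num)
  obtain ⟨m, hm, m', hm', hne, heq⟩ := Finset.exists_ne_map_eq_of_card_lt_of_maps_to hcard hmaps
  simp only [Finset.mem_insert, Finset.mem_singleton] at hm hm'
  exact hne (pow_injOn_Iio_orderOf (mem_Iio.2 (by omega)) (mem_Iio.2 (by omega)) heq)

lemma eq_one_or_neg_one_of_closedNbhd_zpow_eq {x : K} (hx : ¬IsOfFinOrder x) {n : ℤ}
    (hn : n ≠ 0) (h : closedNbhd (𝒢± K) (x ^ n) = closedNbhd (𝒢± K) x) : n = 1 ∨ n = -1 := by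
  by_contra hn1
  obtain ⟨p, hnp, hp⟩ := Nat.exists_infinite_primes (n.natAbs + 1)
  rcases h ▸ zpow_mem_closedNbhd x (n := p) (by exact_mod_cast hp.ne_zero) with heq | hadj
  · have := injective_zpow_iff_not_isOfFinOrder.2 hx heq
    omega
  · exact not_adj_zpow hx (Int.not_dvd_prime_or_prime_dvd hp (by omega) (by omega)) hadj

lemma eq_or_eq_inv_of_closedNbhd_eq {a x : K} (ha : ¬IsOfFinOrder a) (hx : ¬IsOfFinOrder x)
    (h : closedNbhd (𝒢± K) a = closedNbhd (𝒢± K) x) : a = x ∨ a = x⁻¹ := by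
  rcases (h ▸ mem_insert a _ : a ∈ closedNbhd (𝒢± K) x) with rfl | ⟨-, n, hn, rfl | rfl⟩
  · exact Or.inl rfl
  · rcases eq_one_or_neg_one_of_closedNbhd_zpow_eq hx hn h with rfl | rfl <;> simp
  · rcases eq_one_or_neg_one_of_closedNbhd_zpow_eq ha hn h.symm with rfl | rfl <;> simp

lemma notMem_closedNbhd_one (hG : Monoid.IsTorsionFree G) {x : G} (hx : x ≠ 1) :
    x ∉ closedNbhd (𝒢± G) 1 := by
  rintro (rfl | ⟨-, n, hn, h | h⟩)
  · exact hx rfl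
  · exact hx (by simpa using h)
  · exact hG x hx (isOfFinOrder_iff_zpow_eq_one.2 ⟨n, hn, h.symm⟩)

lemma closedNbhd_eq_iff_of_torsionFree (hG : Monoid.IsTorsionFree G) {a x : G} (hx : x ≠ 1) :
    closedNbhd (𝒢± G) a = closedNbhd (𝒢± G) x ↔ a = x ∨ a = x⁻¹ := by
  refine ⟨fun h => ?_, ?_⟩
  · have ha : a ≠ 1 := by
      rintro rfl
      exact notMem_closedNbhd_one hG hx (h ▸ mem_insert x _)
    exact eq_or_eq_inv_of_closedNbhd_eq (hG a ha) (hG x hx) h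
  · rintro (rfl | rfl)
    exacts [rfl, closedNbhd_inv x]

lemma eq_or_eq_map_inv_of_closedNbhd_eq (hG : Monoid.IsTorsionFree G) (φ : 𝒢± G ≃g 𝒢± H)
    {g : G} (hg : g ≠ 1) {y : H} (h : closedNbhd (𝒢± H) y = closedNbhd (𝒢± H) (φ g)) :
    y = φ g ∨ y = φ g⁻¹ := by
  rw [← φ.apply_symm_apply y, φ.closedNbhd_eq_iff, closedNbhd_eq_iff_of_torsionFree hG hg] at h
  rcases h with h | h <;> [left; right] <;> rw [← h, φ.apply_symm_apply]

lemma adj_zpow_two_pow {x : K} (hx : ¬IsOfFinOrder x) {i j : ℕ} (hij : i < j) :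
    (𝒢± K).Adj (x ^ (2 ^ i : ℤ)) (x ^ (2 ^ j : ℤ)) := by
  have hlt : (2 : ℤ) ^ i < 2 ^ j := pow_lt_pow_right₀ one_lt_two hij
  refine ⟨fun h => hlt.ne (injective_zpow_iff_not_isOfFinOrder.2 hx h), 2 ^ (j - i),
    by positivity, Or.inl ?_⟩
  rw [← zpow_mul, ← pow_add, Nat.add_sub_cancel' hij.le]

lemma closedNbhd_zpow_two_pow_ne (hG : Monoid.IsTorsionFree G) {g : G} (hg : g ≠ 1) {i j : ℕ}
    (hij : i < j) : closedNbhd (𝒢± G) (g ^ (2 ^ i : ℤ)) ≠ closedNbhd (𝒢± G) (g ^ (2 ^ j : ℤ)) := by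
  have hinj := injective_zpow_iff_not_isOfFinOrder.2 (hG g hg)
  have hlt : (2 : ℤ) ^ i < 2 ^ j := pow_lt_pow_right₀ one_lt_two hij
  have hpos : (0 : ℤ) < 2 ^ i := by positivity
  have hne : g ^ (2 ^ j : ℤ) ≠ 1 := fun h => hinj.ne (by positivity : (2 : ℤ) ^ j ≠ 0) (by simpa)
  rw [Ne, closedNbhd_eq_iff_of_torsionFree hG hne, ← zpow_neg, hinj.eq_iff, hinj.eq_iff]
  rintro (h | h) <;> linarith

theorem not_isOfFinOrder_map (hG : Monoid.IsTorsionFree G) (φ : 𝒢± G ≃g 𝒢± H) {g : G}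
    (hg : g ≠ 1) : ¬IsOfFinOrder (φ g) := by
  intro hfin
  have hinj := injective_zpow_iff_not_isOfFinOrder.2 (hG g hg)
  have hne (i : ℕ) : g ^ (2 ^ i : ℤ) ≠ 1 :=
    fun h => hinj.ne (by positivity : (2 : ℤ) ^ i ≠ 0) (by simpa)
  have hadj {i j : ℕ} (hij : i < j) : (𝒢± H).Adj (φ (g ^ (2 ^ i : ℤ))) (φ (g ^ (2 ^ j : ℤ))) :=
    φ.map_adj_iff.2 (adj_zpow_two_pow (hG g hg) hij)
  have hfin' (i : ℕ) : IsOfFinOrder (φ (g ^ (2 ^ i : ℤ))) := by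
    have h0 : IsOfFinOrder (φ (g ^ (2 ^ 0 : ℤ))) := by simpa using hfin
    rcases i with _ | i
    exacts [h0, h0.of_adj (hadj i.succ_pos)]
  obtain ⟨i, j, hij, h⟩ := (finite_Iic 6).exists_lt_map_eq_of_forall_mem
    (f := fun i : ℕ => orderOf (φ (g ^ (2 ^ i : ℤ)))) fun i =>
      orderOf_le_six (hfin' i) fun _ hy => eq_or_eq_map_inv_of_closedNbhd_eq hG φ (hne i) hy
  exact orderOf_ne_of_adj (hfin' i) (hadj hij)
    (φ.closedNbhd_eq_iff.not.2 (closedNbhd_zpow_two_pow_ne hG hg hij)) h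

theorem map_inv_of_torsionFree (hG : Monoid.IsTorsionFree G) (φ : 𝒢± G ≃g 𝒢± H) {g : G}
    (hg : g ≠ 1) : φ g⁻¹ = (φ g)⁻¹ := by
  rcases eq_or_eq_map_inv_of_closedNbhd_eq hG φ hg (closedNbhd_inv (φ g)) with h | h
  · refine absurd (isOfFinOrder_iff_zpow_eq_one.2 ⟨2, two_ne_zero, ?_⟩)
      (not_isOfFinOrder_map hG φ hg)
    rw [zpow_two]
    nth_rw 1 [← h]
    exact inv_mul_cancel _
  · exact h.symm

lemma mem_Mnbr_iff {x y : K} : y ∈ Mnbr x ↔ (𝒢± K).Adj x y ∧ y ≠ x⁻¹ := by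
  constructor
  · rintro (⟨h1, h2, n, hn, he⟩ | ⟨h1, h2, n, hn, he⟩)
    · exact ⟨⟨Ne.symm h1, n, hn, Or.inr he⟩, h2⟩
    · exact ⟨⟨Ne.symm h1, n, hn, Or.inl he⟩, h2⟩
  · rintro ⟨⟨hne, n, hn, he | he⟩, hinv⟩
    · exact Or.inr ⟨Ne.symm hne, hinv, n, hn, he⟩
    · exact Or.inl ⟨Ne.symm hne, hinv, n, hn, he⟩

theorem image_Mnbr (hG : Monoid.IsTorsionFree G) (φ : 𝒢± G ≃g 𝒢± H) {x : G} (hx : x ≠ 1) :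
    φ '' Mnbr x = Mnbr (φ x) := by
  have : Mnbr x = φ ⁻¹' Mnbr (φ x) := by
    ext y
    rw [mem_preimage, mem_Mnbr_iff, mem_Mnbr_iff, φ.map_adj_iff, ← map_inv_of_torsionFree hG φ hx,
      φ.injective.ne_iff]
  rw [this, φ.surjective.image_preimage]

lemma mem_Osucc_iff {x y : K} (hx : ¬IsOfFinOrder x) :
    y ∈ Osucc x ↔ ∃ n : ℤ, 2 ≤ n.natAbs ∧ y = x ^ n := by
  have hinj := injective_zpow_iff_not_isOfFinOrder.2 hx
  constructor
  · rintro ⟨h1, h2, n, hn, rfl⟩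
    have : n ≠ 1 := by rintro rfl; exact h1 (zpow_one x)
    have : n ≠ -1 := by rintro rfl; exact h2 (zpow_neg_one x)
    exact ⟨n, by omega, rfl⟩
  · rintro ⟨n, hn, rfl⟩
    refine ⟨fun h => ?_, fun h => ?_, n, by omega, rfl⟩
    · have := hinj (h.trans (zpow_one x).symm)
      omega
    · have := hinj (h.trans (zpow_neg_one x).symm)
      omega

lemma mem_Ipred_iff_mem_Osucc {x y : K} : x ∈ Ipred y ↔ y ∈ Osucc x :=
  ⟨fun ⟨h1, h2, h3⟩ => ⟨Ne.symm h1, fun h => h2 (by rw [h, inv_inv]), h3⟩,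
    fun ⟨h1, h2, h3⟩ => ⟨Ne.symm h1, fun h => h2 (by rw [h, inv_inv]), h3⟩⟩

lemma disjoint_Ipred_Osucc {x : K} (hx : ¬IsOfFinOrder x) : Disjoint (Ipred x) (Osucc x) := by
  refine disjoint_left.2 fun y ⟨_, _, m, _, hxm⟩ hy => ?_
  obtain ⟨n, hn, rfl⟩ := (mem_Osucc_iff hx).1 hy
  rw [← zpow_mul] at hxm
  have := Int.eq_one_or_neg_one_of_mul_eq_one
    (injective_zpow_iff_not_isOfFinOrder.2 hx (hxm.symm.trans (zpow_one x).symm))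
  omega

lemma adj_of_mem_Ipred_of_mem_Osucc {x u v : K} (hx : ¬IsOfFinOrder x) (hu : u ∈ Ipred x)
    (hv : v ∈ Osucc x) : (𝒢± K).Adj u v := by
  have hne := (disjoint_Ipred_Osucc hx).ne_of_mem hu hv
  obtain ⟨-, -, m, hm, rfl⟩ := hu
  obtain ⟨-, -, n, hn, rfl⟩ := hv
  exact ⟨hne, m * n, mul_ne_zero hm hn, Or.inl (zpow_mul u m n).symm⟩

lemma mem_Osucc_iff_of_not_adj {x u v : K} (hx : ¬IsOfFinOrder x) (hu : u ∈ Mnbr x)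
    (hv : v ∈ Mnbr x) (h : ¬(𝒢± K).Adj u v) : u ∈ Osucc x ↔ v ∈ Osucc x :=
  ⟨fun huO => hv.resolve_left fun hvI => h (adj_of_mem_Ipred_of_mem_Osucc hx hvI huO).symm,
    fun hvO => hu.resolve_left fun huI => h (adj_of_mem_Ipred_of_mem_Osucc hx huI hvO)⟩

lemma exists_mem_Osucc_not_adj {x a b : K} (hx : ¬IsOfFinOrder x) (ha : a ∈ Osucc x)
    (hb : b ∈ Osucc x) : ∃ c ∈ Osucc x, ¬(𝒢± K).Adj a c ∧ ¬(𝒢± K).Adj c b := by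
  obtain ⟨m, hm, rfl⟩ := (mem_Osucc_iff hx).1 ha
  obtain ⟨n, hn, rfl⟩ := (mem_Osucc_iff hx).1 hb
  obtain ⟨p, hp_le, hp⟩ := Nat.exists_infinite_primes (m.natAbs + n.natAbs + 1)
  refine ⟨x ^ (p : ℤ), (mem_Osucc_iff hx).2 ⟨p, by omega, rfl⟩,
    not_adj_zpow hx (Int.not_dvd_prime_or_prime_dvd hp hm (by omega)), not_adj_zpow hx ?_⟩
  rw [or_comm]
  exact Int.not_dvd_prime_or_prime_dvd hp hn (by omega)

lemma Osucc_infinite {x : K} (hx : ¬IsOfFinOrder x) : (Osucc x).Infinite :=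
  infinite_of_injective_forall_mem (f := fun k : ℕ => x ^ ((k : ℤ) + 2))
    (fun a b h => by have := injective_zpow_iff_not_isOfFinOrder.2 hx h; omega)
    fun k => (mem_Osucc_iff hx).2 ⟨_, by omega, rfl⟩

lemma Osucc_subset_Osucc {x z : K} (hx : ¬IsOfFinOrder x) (hz : z ∈ Osucc x) :
    Osucc z ⊆ Osucc x := by
  obtain ⟨a, ha, rfl⟩ := (mem_Osucc_iff hx).1 hz
  rintro _ ⟨-, -, k, hk, rfl⟩
  refine (mem_Osucc_iff hx).2 ⟨a * k, ?_, (zpow_mul x a k).symm⟩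
  rw [Int.natAbs_mul]
  exact ha.trans (Nat.le_mul_of_pos_right _ (Int.natAbs_pos.2 hk))

lemma Osucc_inter_Ipred_zpow_finite {u : K} (hu : ¬IsOfFinOrder u) {b : ℤ} (hb : b ≠ 0) :
    (Osucc u ∩ Ipred (u ^ b)).Finite := by
  refine ((finite_Icc (-(b.natAbs : ℤ)) b.natAbs).image (u ^ ·)).subset ?_
  rintro y ⟨hyO, -, -, c, -, hyc⟩
  obtain ⟨j, -, rfl⟩ := (mem_Osucc_iff hu).1 hyO
  rw [← zpow_mul] at hyc
  have := Int.natAbs_le_of_dvd_ne_zero ⟨c, injective_zpow_iff_not_isOfFinOrder.2 hu hyc⟩ hb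
  exact ⟨j, ⟨by omega, by omega⟩, rfl⟩

lemma image_Osucc_subset_or (ψ : 𝒢± K ≃g 𝒢± L) {x : K} {w : L} (hx : ¬IsOfFinOrder x)
    (hw : ¬IsOfFinOrder w) (hM : ψ '' Mnbr x = Mnbr w) :
    ψ '' Osucc x ⊆ Osucc w ∨ ψ '' Osucc x ⊆ Ipred w := by
  have hmem : ∀ y ∈ Osucc x, ψ y ∈ Mnbr w := fun y hy => hM ▸ mem_image_of_mem ψ (Or.inr hy)
  by_cases h : ∃ y ∈ Osucc x, ψ y ∈ Osucc w
  · obtain ⟨y, hy, hψy⟩ := h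
    refine Or.inl ?_
    rintro _ ⟨y', hy', rfl⟩
    obtain ⟨c, hc, hyc, hcy'⟩ := exists_mem_Osucc_not_adj hx hy hy'
    rw [← ψ.map_adj_iff] at hyc hcy'
    exact (mem_Osucc_iff_of_not_adj hw (hmem c hc) (hmem y' hy') hcy').1
      ((mem_Osucc_iff_of_not_adj hw (hmem y hy) (hmem c hc) hyc).1 hψy)
  · simp only [not_exists, not_and] at h
    exact Or.inr fun _ ⟨y, hy, hψy⟩ => hψy ▸ (hmem y hy).resolve_right (h y hy)

lemma image_Osucc_eq_of_subset (ψ : 𝒢± K ≃g 𝒢± L) {x : K} {w : L} (hx : ¬IsOfFinOrder x)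
    (hw : ¬IsOfFinOrder w) (hM : ψ '' Mnbr x = Mnbr w) (h : ψ '' Osucc x ⊆ Osucc w) :
    ψ '' Osucc x = Osucc w := by
  refine h.antisymm ?_
  rcases image_Osucc_subset_or ψ.symm hw hx (ψ.symm_image_eq hM) with h' | h'
  · exact fun v hv => ⟨ψ.symm v, h' ⟨v, hv, rfl⟩, ψ.apply_symm_apply v⟩
  · obtain ⟨y, hy⟩ := (Osucc_infinite hx).nonempty
    have hyI : y ∈ Ipred x := by simpa using h' ⟨ψ y, h ⟨y, hy, rfl⟩, rfl⟩
    exact ((disjoint_Ipred_Osucc hx).ne_of_mem hyI hy rfl).elim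

/-- If a root `x` of `z` went to a root `u` of `φ z`, then `φ (O(z)) ⊆ φ (O(x)) ⊆ O(u)`, so the
infinite set `φ (O(z))` would lie in the finite set `O(u) ∩ I(φ z)`. -/
lemma image_Ipred_subset_of_image_Osucc_subset (hG : Monoid.IsTorsionFree G)
    (φ : 𝒢± G ≃g 𝒢± H) {z : G} (hz : z ≠ 1) (hO : φ '' Osucc z ⊆ Ipred (φ z)) :
    φ '' Ipred z ⊆ Osucc (φ z) := by
  rintro _ ⟨x, hx, rfl⟩
  refine ((image_Mnbr hG φ hz).subset ⟨x, Or.inl hx, rfl⟩).resolve_left fun hφx => ?_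
  have hx1 : x ≠ 1 := by
    rintro rfl
    obtain ⟨-, -, n, -, h⟩ := hx
    exact hz (by simpa using h)
  have hxinf := hG x hx1
  have huinf := not_isOfFinOrder_map hG φ hx1
  have hzx : z ∈ Osucc x := mem_Ipred_iff_mem_Osucc.1 hx
  have hφzx : φ z ∈ Osucc (φ x) := mem_Ipred_iff_mem_Osucc.1 hφx
  have hOx : φ '' Osucc x ⊆ Osucc (φ x) :=
    (image_Osucc_subset_or φ hxinf huinf (image_Mnbr hG φ hx1)).resolve_right fun h =>
      (disjoint_Ipred_Osucc huinf).ne_of_mem (h ⟨z, hzx, rfl⟩) hφzx rfl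
  obtain ⟨b, hb, hφz⟩ := (mem_Osucc_iff huinf).1 hφzx
  refine (Osucc_infinite (hG z hz)).image φ.injective.injOn <|
    (Osucc_inter_Ipred_zpow_finite huinf (b := b) (by omega)).subset <|
      subset_inter ((image_mono (Osucc_subset_Osucc hxinf hzx)).trans hOx) ?_
  rw [← hφz]
  exact hO

lemma image_Ipred_eq_of_image_Osucc_subset (hG : Monoid.IsTorsionFree G)
    (φ : 𝒢± G ≃g 𝒢± H) {z : G} (hz : z ≠ 1) (hO : φ '' Osucc z ⊆ Ipred (φ z)) :
    φ '' Ipred z = Osucc (φ z) := by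
  have hwinf := not_isOfFinOrder_map hG φ hz
  refine (image_Ipred_subset_of_image_Osucc_subset hG φ hz hO).antisymm ?_
  rcases image_Osucc_subset_or φ.symm hwinf (hG z hz) (φ.symm_image_eq (image_Mnbr hG φ hz))
    with h | h
  · obtain ⟨v, hv⟩ := (Osucc_infinite hwinf).nonempty
    have hvI : v ∈ Ipred (φ z) := by simpa using hO ⟨φ.symm v, h ⟨v, hv, rfl⟩, rfl⟩
    exact ((disjoint_Ipred_Osucc hwinf).ne_of_mem hvI hv rfl).elim
  · exact fun v hv => ⟨φ.symm v, by simpa using h ⟨v, hv, rfl⟩, φ.apply_symm_apply v⟩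

lemma zpmPowerGraph_adj_map_iff {f : K →* L} (hf : Injective f) {a b : K} :
    (𝒢± L).Adj (f a) (f b) ↔ (𝒢± K).Adj a b := by
  change (_ ∧ _) ↔ (_ ∧ _)
  simp only [← map_zpow, hf.eq_iff, hf.ne_iff]

def zpmPowerGraphEmbedding (f : K →* L) (hf : Injective f) : 𝒢± K ↪g 𝒢± L :=
  ⟨⟨f, hf⟩, zpmPowerGraph_adj_map_iff hf⟩

lemma image_Osucc_of_injective {f : K →* L} (hf : Injective f) (x : K) :
    f '' Osucc x = Osucc (f x) := by
  ext y
  constructor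
  · rintro ⟨_, ⟨h1, h2, n, hn, rfl⟩, rfl⟩
    exact ⟨hf.ne h1, by rw [← map_inv]; exact hf.ne h2, n, hn, map_zpow f x n⟩
  · rintro ⟨h1, h2, n, hn, rfl⟩
    refine ⟨x ^ n, ⟨fun h => h1 ?_, fun h => h2 ?_, n, hn, rfl⟩, map_zpow f x n⟩
    · rw [← map_zpow, h]
    · rw [← map_zpow, h, map_inv]

noncomputable def isoInduceComplOsucc {x : K} (hx : ¬IsOfFinOrder x) :
    (𝒢± (Multiplicative ℤ))ᶜ.induce (Osucc (Multiplicative.ofAdd 1)) ≃g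
      (𝒢± K)ᶜ.induce (Osucc x) :=
  have hf : Injective (zpowersHom K x) := fun a b h =>
    Multiplicative.toAdd.injective (injective_zpow_iff_not_isOfFinOrder.2 hx (by simpa using h))
  have himage := image_Osucc_of_injective hf (Multiplicative.ofAdd 1)
  (Embedding.complEquiv (zpmPowerGraphEmbedding _ hf)).induceIsoOfImageEq
    (by simp only [zpowersHom_apply, toAdd_ofAdd, zpow_one] at himage; exact himage)

end Group

/-- Let `G` be torsion-free, `φ` an isomorphism of the Z±-power graphs of `G` and `H`, and `z` a
non-identity element of `G`. Then `φ` maps `M_G(z)` onto `M_H(φ z)`, inducing an isomorphism of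
the subgraphs of the complements induced by these sets, and the subgraphs of the complements
induced by `I_G(z)` and `I_H(φ z)` (resp. `O_G(z)` and `O_H(φ z)`) are isomorphic. -/
theorem iso_on_Mnbr {G H : Type*} [Group G] [Group H] (hG : Monoid.IsTorsionFree G)
    (φ : zpmPowerGraph G ≃g zpmPowerGraph H) (z : G) (hz : z ≠ 1) :
    (φ '' Mnbr z = Mnbr (φ z)) ∧
      (∀ u ∈ Mnbr z, ∀ v ∈ Mnbr z,
        ((zpmPowerGraph G)ᶜ).Adj u v ↔ ((zpmPowerGraph H)ᶜ).Adj (φ u) (φ v)) ∧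
      Nonempty (((zpmPowerGraph G)ᶜ).induce (Mnbr z) ≃g
        ((zpmPowerGraph H)ᶜ).induce (Mnbr (φ z))) ∧
      Nonempty (((zpmPowerGraph G)ᶜ).induce (Ipred z) ≃g
        ((zpmPowerGraph H)ᶜ).induce (Ipred (φ z))) ∧
      Nonempty (((zpmPowerGraph G)ᶜ).induce (Osucc z) ≃g
        ((zpmPowerGraph H)ᶜ).induce (Osucc (φ z))) := by
  have hzinf := hG z hz
  have hwinf := not_isOfFinOrder_map hG φ hz
  have hM := image_Mnbr hG φ hz
  let φc := Embedding.complEquiv φ.toEmbedding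
  let eO := (isoInduceComplOsucc hzinf).symm.trans (isoInduceComplOsucc hwinf)
  refine ⟨hM, fun u _ v _ => φc.map_adj_iff.symm, ⟨φc.induceIsoOfImageEq hM⟩, ?_, ⟨eO⟩⟩
  rcases image_Osucc_subset_or φ hzinf hwinf hM with hO | hO
  · have hI : φ '' Ipred z = Ipred (φ z) :=
      image_eq_of_image_union_eq φ.injective (disjoint_Ipred_Osucc hzinf)
        (disjoint_Ipred_Osucc hwinf) hM (image_Osucc_eq_of_subset φ hzinf hwinf hM hO)
    exact ⟨φc.induceIsoOfImageEq hI⟩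
  · have hIO := image_Ipred_eq_of_image_Osucc_subset hG φ hz hO
    have hOI : φ '' Osucc z = Ipred (φ z) :=
      image_eq_of_image_union_eq φ.injective (disjoint_Ipred_Osucc hzinf).symm
        (disjoint_Ipred_Osucc hwinf) (by rw [union_comm]; exact hM) hIO
    exact ⟨(φc.induceIsoOfImageEq hIO).trans (eO.symm.trans (φc.induceIsoOfImageEq hOI))⟩
end
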